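/- arXiv:1507.03175 — 3 statements merged into one kernel-verified Lean document; each statement's English description precedes it below -/
import Mathlib

section
/- Let r_g > 0 and E > 0. The cubic equation X³ + √(r_g/r) X − E = 0 has, for each r > 0, a unique positive real root X(r), and the function H(r) = 4√(r_g/r) − 3E/X(r) has a unique positive zero at r_H = r_g (16/(27E²))^{2/3}. -/
set_option maxHeartbeats 1000000 in
/-- For `r_g, E > 0`: for each `r > 0` the cubic `X³ + √(r_g/r) X − E = 0` has a unique
positive real root, and `H(r) = 4√(r_g/r) − 3E/X(r)` has its unique positive zero at
`r_H = r_g (16/(27E²))^{2/3}`. -/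
theorem schwarzschild_n3_horizon (rg E : ℝ) (hrg : 0 < rg) (hE : 0 < E) :
    (∀ r > (0 : ℝ), ∃! X : ℝ, 0 < X ∧ X ^ 3 + Real.sqrt (rg / r) * X - E = 0)
    ∧ (∀ r > (0 : ℝ), ∀ X : ℝ, 0 < X → X ^ 3 + Real.sqrt (rg / r) * X - E = 0 →
        (4 * Real.sqrt (rg / r) - 3 * E / X = 0
          ↔ r = rg * (16 / (27 * E ^ 2)) ^ ((2 : ℝ) / 3))) := by
  have cube_inj : ∀ x y : ℝ, 0 < x → 0 < y → x ^ 3 = y ^ 3 → x = y := by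
    intro x y hx hy h
    rcases lt_trichotomy x y with h1 | h1 | h1
    · have key : (y - x) * (x ^ 2 + x * y + y ^ 2) > 0 :=
        mul_pos (by linarith) (by nlinarith [mul_pos hx hy])
      nlinarith [key]
    · exact h1
    · have key : (x - y) * (x ^ 2 + x * y + y ^ 2) > 0 :=
        mul_pos (by linarith) (by nlinarith [mul_pos hx hy])
      nlinarith [key]
  have uniq : ∀ s : ℝ, 0 ≤ s → ∀ a b : ℝ, 0 < a → 0 < b →
      a ^ 3 + s * a - E = 0 → b ^ 3 + s * b - E = 0 → a = b := by
    intro s hs a b ha hb hA hB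
    rcases lt_trichotomy a b with h | h | h
    · have key : (b - a) * (a ^ 2 + a * b + b ^ 2) > 0 :=
        mul_pos (by linarith) (by nlinarith [mul_pos ha hb])
      nlinarith [key, mul_nonneg hs (sub_pos.mpr h).le]
    · exact h
    · have key : (a - b) * (a ^ 2 + a * b + b ^ 2) > 0 :=
        mul_pos (by linarith) (by nlinarith [mul_pos ha hb])
      nlinarith [key, mul_nonneg hs (sub_pos.mpr h).le]
  -- c = (E/4)^{1/3}
  set c : ℝ := (E / 4) ^ ((1 : ℝ) / 3) with hc_def
  have hE4 : (0 : ℝ) < E / 4 := by linarith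
  have hc_pos : 0 < c := Real.rpow_pos_of_pos hE4 _
  have hc3 : c ^ 3 = E / 4 := by
    rw [hc_def, ← Real.rpow_natCast ((E / 4) ^ ((1:ℝ)/3)) 3, ← Real.rpow_mul hE4.le]
    norm_num
  set a : ℝ := (16 / (27 * E ^ 2)) ^ ((2 : ℝ) / 3) with ha_def
  have h16 : (0 : ℝ) < 16 / (27 * E ^ 2) := by positivity
  have ha_pos : 0 < a := Real.rpow_pos_of_pos h16 _
  have ha3 : a ^ 3 = (16 / (27 * E ^ 2)) ^ 2 := by
    rw [ha_def, ← Real.rpow_natCast ((16 / (27 * E^2)) ^ ((2:ℝ)/3)) 3, ← Real.rpow_mul h16.le]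
    norm_num
  clear_value c a
  have h_ac : a = 1 / (9 * c ^ 4) := by
    apply cube_inj _ _ ha_pos (by positivity)
    rw [ha3]
    have hc12 : c ^ 12 = (E / 4) ^ 4 := by
      rw [show (12 : ℕ) = 3 * 4 by norm_num, pow_mul, hc3]
    field_simp
    nlinarith [hc12]
  constructor
  · intro r hr
    set s := Real.sqrt (rg / r) with hs
    have hs0 : 0 ≤ s := Real.sqrt_nonneg _
    obtain ⟨X, hX1, hX2⟩ : ∃ X ∈ Set.Icc (0:ℝ) (max 1 E), X ^ 3 + s * X = E := by
      have h01 : (0:ℝ) ≤ max 1 E := le_trans zero_le_one (le_max_left _ _)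
      have hcont : ContinuousOn (fun X : ℝ => X ^ 3 + s * X) (Set.Icc 0 (max 1 E)) := by
        fun_prop
      have key := intermediate_value_Icc h01 hcont
      have hmem : E ∈ Set.Icc ((fun X : ℝ => X ^ 3 + s * X) 0)
          ((fun X : ℝ => X ^ 3 + s * X) (max 1 E)) := by
        constructor
        · simp; linarith
        · have hM : E ≤ max 1 E := le_max_right _ _
          have h1 : (1:ℝ) ≤ max 1 E := le_max_left _ _
          have hMM : max 1 E ≤ (max 1 E) ^ 3 := le_self_pow₀ h1 (by norm_num)
          simp only
          nlinarith [mul_nonneg hs0 h01]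
      exact key hmem
    have hXpos : 0 < X := by
      rcases lt_or_eq_of_le hX1.1 with h | h
      · exact h
      · exfalso; rw [← h] at hX2; simp at hX2; linarith
    refine ⟨X, ⟨hXpos, by linarith⟩, ?_⟩
    rintro Y ⟨hYpos, hY⟩
    exact uniq s hs0 Y X hYpos hXpos hY (by linarith)
  · intro r hr X hX hcubic
    set s := Real.sqrt (rg / r) with hs
    have hs0 : 0 ≤ s := Real.sqrt_nonneg _
    have hrgr : 0 < rg / r := by positivity
    have hs2 : s ^ 2 = rg / r := Real.sq_sqrt hrgr.le
    have hspos : 0 < s := Real.sqrt_pos.mpr hrgr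
    clear_value s
    have h9 : (0:ℝ) < 9 * c ^ 4 := by positivity
    constructor
    · intro h
      have h1 : 3 * E = 4 * s * X := by
        have h2 : 3 * E / X = 4 * s := by linarith
        rw [div_eq_iff hX.ne'] at h2; linarith
      have hsX : s = 3 * X ^ 2 :=
        mul_right_cancel₀ hX.ne' (show s * X = 3 * X ^ 2 * X by linear_combination (-3) * hcubic - h1)
      have hX3 : X ^ 3 = E / 4 := by linear_combination hcubic / 4 - (X / 4) * hsX
      have hXc : X = c := cube_inj _ _ hX hc_pos (by rw [hX3, hc3])
      have hsval : s = 3 * c ^ 2 := by rw [hsX, hXc]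
      have hr_eq : rg / r = 9 * c ^ 4 := by rw [← hs2, hsval]; ring
      have hrval : r = rg / (9 * c ^ 4) := by
        have := (div_eq_iff (ne_of_gt hr)).mp hr_eq
        rw [eq_div_iff h9.ne']
        linarith [this]
      rw [h_ac, hrval]; ring
    · intro h
      have hr_eq : rg / r = 9 * c ^ 4 := by
        rw [h, h_ac]
        rw [show rg * (1 / (9 * c ^ 4)) = rg / (9 * c ^ 4) by ring]
        rw [div_div_eq_mul_div, mul_comm, mul_div_assoc, div_self hrg.ne', mul_one]
      have hsval : s = 3 * c ^ 2 := by
        rw [hs, hr_eq, show 9 * c ^ 4 = (3 * c ^ 2) ^ 2 by ring]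
        exact Real.sqrt_sq (by positivity)
      have hXc : X = c := by
        apply uniq s hs0 X c hX hc_pos hcubic
        rw [hsval]; nlinarith [hc3]
      have hEc : E = 4 * c ^ 3 := by linarith [hc3]
      rw [hXc, hsval, hEc]
      have hdiv : 3 * (4 * c ^ 3) / c = 12 * c ^ 2 := by
        rw [div_eq_iff hc_pos.ne']; ring
      rw [hdiv]; ring
end

section
/- Under the same local expansion f(r) = f₀(r)(r−r_g)^a, N(r) = N₀(r)(r−r_g)^{b/2} with f₀, N₀ positive continuous at r_g, and for the anisotropic dispersion of degree n ≥ 2 (trajectory dt/dr ∝ 1/(√f · N^{1/n})), the integral ∫_r^{r₁} ds/(√(f(s)) N(s)^{1/n}) diverges as r → r_g⁺ if and only if a + b/n ≥ 2. -/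
open Filter Set MeasureTheory Topology

/-! On `(r_g, r₁]` the integrand factors as `g(s) (s - r_g)^(-p)` with `p = (a + b/n)/2` and `g`
continuous and positive on `[r_g, r₁]`, hence bounded between positive constants. For `p < 1` the
integral is dominated by the integrable `(s - r_g)^(-p)`; for `p ≥ 1` it dominates a multiple of
`∫ ds/(s - r_g) = log ((r₁ - r_g)/(r - r_g))`. -/

lemma one_div_sqrt_mul_rpow_mul_rpow_eq (n : ℕ) (a b f₀ N₀ t : ℝ) (hf₀ : 0 < f₀) (hN₀ : 0 < N₀)
    (ht : 0 < t) :
    1 / (√(f₀ * t ^ a) * (N₀ * t ^ (b / 2)) ^ ((1 : ℝ) / n))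
      = 1 / (√f₀ * N₀ ^ ((1 : ℝ) / n)) * t ^ (-((a + b / n) / 2)) := by
  have hexp : -((a + b / n) / 2) = -(a * (1 / 2) + b / 2 * (1 / n)) := by ring
  rw [Real.sqrt_mul hf₀.le, Real.mul_rpow hN₀.le (Real.rpow_nonneg ht.le _),
    Real.sqrt_eq_rpow (t ^ a), ← Real.rpow_mul ht.le, ← Real.rpow_mul ht.le, hexp,
    Real.rpow_neg ht.le, Real.rpow_add ht]
  ring

lemma rpow_one_sub_mul_inv_le_rpow_neg {t T p : ℝ} (ht : 0 < t) (htT : t ≤ T) (hp : 1 ≤ p) :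
    T ^ (1 - p) * t⁻¹ ≤ t ^ (-p) := by
  have hsplit : t ^ (-p) = t ^ (1 - p) * t⁻¹ := by
    rw [← Real.rpow_neg_one, ← Real.rpow_add ht]; ring_nf
  rw [hsplit]
  exact mul_le_mul_of_nonneg_right (Real.rpow_le_rpow_of_nonpos ht htT (by linarith))
    (inv_nonneg.2 ht.le)

lemma tendsto_integral_inv_sub_nhdsGT {c r₁ : ℝ} (hr : c < r₁) :
    Tendsto (fun r => ∫ s in r..r₁, (s - c)⁻¹) (𝓝[>] c) atTop := by
  have hsub : Tendsto (fun r => r - c) (𝓝[>] c) (𝓝[>] 0) :=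
    tendsto_nhdsWithin_of_tendsto_nhds_of_eventually_within _
      (((continuous_sub_right c).tendsto' c 0 (sub_self c)).mono_left nhdsWithin_le_nhds)
      (eventually_nhdsWithin_of_forall fun _ (hr' : c < _) => sub_pos.2 hr')
  have hlog : Tendsto (fun r => Real.log (r₁ - c) - Real.log (r - c)) (𝓝[>] c) atTop :=
    tendsto_atTop_add_const_left _ _
      (tendsto_neg_atBot_atTop.comp (Real.tendsto_log_nhdsGT_zero.comp hsub))
  refine hlog.congr' ?_
  filter_upwards [self_mem_nhdsWithin] with r (hr' : c < r)
  rw [intervalIntegral.integral_comp_sub_right (fun x => x⁻¹),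
    integral_inv_of_pos (sub_pos.2 hr') (sub_pos.2 hr),
    Real.log_div (sub_pos.2 hr).ne' (sub_pos.2 hr').ne']

lemma not_tendsto_integral_atTop_of_integrableOn {h : ℝ → ℝ} {c r₁ : ℝ} (hr : c < r₁)
    (hint : IntegrableOn h (Ioc c r₁)) (hnonneg : ∀ s ∈ Ioc c r₁, 0 ≤ h s) :
    ¬Tendsto (fun r => ∫ s in r..r₁, h s) (𝓝[>] c) atTop := by
  intro htop
  have hbound : ∀ r ∈ Ioc c r₁, ∫ s in r..r₁, h s ≤ ∫ s in Ioc c r₁, h s := fun r hr => by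
    rw [intervalIntegral.integral_of_le hr.2]
    exact setIntegral_mono_set hint ((ae_restrict_iff' measurableSet_Ioc).2
      (Eventually.of_forall hnonneg)) (Ioc_subset_Ioc_left hr.1.le).eventuallyLE
  obtain ⟨r, hlt, hr⟩ := ((htop.eventually_gt_atTop _).and (Ioc_mem_nhdsGT hr)).exists
  exact (hbound r hr).not_gt hlt

theorem tendsto_integral_mul_rpow_neg_atTop_iff {g : ℝ → ℝ} {c r₁ p : ℝ} (hr : c < r₁)
    (hg : ContinuousOn g (Icc c r₁)) (hg_pos : ∀ s ∈ Icc c r₁, 0 < g s) :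
    Tendsto (fun r => ∫ s in r..r₁, g s * (s - c) ^ (-p)) (𝓝[>] c) atTop ↔ 1 ≤ p := by
  constructor
  · intro htop
    by_contra! hp
    have hpow : IntegrableOn (fun s => (s - c) ^ (-p)) (Ioc c r₁) := by
      rw [← intervalIntegrable_iff_integrableOn_Ioc_of_le hr.le]
      simpa using ((intervalIntegral.intervalIntegrable_rpow' (a := 0) (b := r₁ - c)
        (neg_lt_neg hp)).comp_sub_right c)
    refine not_tendsto_integral_atTop_of_integrableOn hr
      (hpow.continuousOn_mul_of_subset hg isCompact_Icc measurableSet_Ioc Ioc_subset_Icc_self)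
      (fun s hs => ?_) htop
    exact mul_nonneg (hg_pos s (Ioc_subset_Icc_self hs)).le (Real.rpow_nonneg (sub_pos.2 hs.1).le _)
  · intro hp
    obtain ⟨m, hm, hmin⟩ := isCompact_Icc.exists_isMinOn (nonempty_Icc.2 hr.le) hg
    have hC : 0 < g m * (r₁ - c) ^ (1 - p) :=
      mul_pos (hg_pos m hm) (Real.rpow_pos_of_pos (sub_pos.2 hr) _)
    refine tendsto_atTop_mono' _ ?_ ((tendsto_integral_inv_sub_nhdsGT hr).const_mul_atTop hC)
    filter_upwards [Ioo_mem_nhdsGT hr] with r hr'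
    have hsub : ContinuousOn (fun s => s - c) (Icc r r₁) := by fun_prop
    have hsub_ne : ∀ s ∈ Icc r r₁, s - c ≠ 0 := fun s hs => (sub_pos.2 (hr'.1.trans_le hs.1)).ne'
    rw [← intervalIntegral.integral_const_mul]
    refine intervalIntegral.integral_mono_on hr'.2.le ?_ ?_ fun s hs => ?_
    · exact (continuousOn_const.mul (hsub.inv₀ hsub_ne)).intervalIntegrable_of_Icc hr'.2.le
    · exact ((hg.mono (Icc_subset_Icc_left hr'.1.le)).mul
        (hsub.rpow_const fun s hs => Or.inl (hsub_ne s hs))).intervalIntegrable_of_Icc hr'.2.le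
    have hs_pos : 0 < s - c := sub_pos.2 (hr'.1.trans_le hs.1)
    rw [mul_assoc]
    exact mul_le_mul (hmin ⟨hr'.1.le.trans hs.1, hs.2⟩)
      (rpow_one_sub_mul_inv_le_rpow_neg hs_pos (sub_le_sub_right hs.2 c) hp)
      (mul_nonneg (Real.rpow_nonneg (sub_pos.2 hr).le _) (inv_nonneg.2 hs_pos.le))
      (hg_pos s ⟨hr'.1.le.trans hs.1, hs.2⟩).le

theorem horizon_criterion_n_general (n : ℕ) (rg r₁ a b : ℝ) (hr : rg < r₁)
    (f₀ N₀ : ℝ → ℝ)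
    (hf₀ : ContinuousOn f₀ (Set.Icc rg r₁)) (hN₀ : ContinuousOn N₀ (Set.Icc rg r₁))
    (hf₀pos : ∀ s ∈ Set.Icc rg r₁, 0 < f₀ s) (hN₀pos : ∀ s ∈ Set.Icc rg r₁, 0 < N₀ s) :
    Tendsto (fun r : ℝ => ∫ s in r..r₁,
        1 / (Real.sqrt (f₀ s * (s - rg) ^ a)
              * (N₀ s * (s - rg) ^ (b / 2)) ^ ((1 : ℝ) / n)))
      (nhdsWithin rg (Set.Ioi rg)) atTop
    ↔ 2 ≤ a + b / n := by
  set g : ℝ → ℝ := fun s => 1 / (√(f₀ s) * N₀ s ^ ((1 : ℝ) / n))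
  have hden_pos : ∀ s ∈ Icc rg r₁, 0 < √(f₀ s) * N₀ s ^ ((1 : ℝ) / n) := fun s hs =>
    mul_pos (Real.sqrt_pos.2 (hf₀pos s hs)) (Real.rpow_pos_of_pos (hN₀pos s hs) _)
  have hg : ContinuousOn g (Icc rg r₁) :=
    continuousOn_const.div (hf₀.sqrt.mul (hN₀.rpow_const fun s hs => Or.inl (hN₀pos s hs).ne'))
      fun s hs => (hden_pos s hs).ne'
  have hfactor : (fun r : ℝ => ∫ s in r..r₁, 1 / (√(f₀ s * (s - rg) ^ a)
        * (N₀ s * (s - rg) ^ (b / 2)) ^ ((1 : ℝ) / n)))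
      =ᶠ[𝓝[>] rg] fun r => ∫ s in r..r₁, g s * (s - rg) ^ (-((a + b / n) / 2)) := by
    filter_upwards [Ioo_mem_nhdsGT hr] with r hr'
    refine intervalIntegral.integral_congr fun s hs => ?_
    rw [uIcc_of_le hr'.2.le] at hs
    have hs' : s ∈ Icc rg r₁ := ⟨hr'.1.le.trans hs.1, hs.2⟩
    exact one_div_sqrt_mul_rpow_mul_rpow_eq n a b _ _ _ (hf₀pos s hs') (hN₀pos s hs')
      (sub_pos.2 (hr'.1.trans_le hs.1))
  rw [tendsto_congr' hfactor,
    tendsto_integral_mul_rpow_neg_atTop_iff hr hg fun s hs => one_div_pos.2 (hden_pos s hs),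
    le_div_iff₀ two_pos, one_mul]

/-- Kiritsis–Kofinas horizon criterion for dispersion `F(ζ) = ζⁿ`, `n ≥ 2`: with
`f(s) = f₀(s)(s − r_g)^a`, `N(s) = N₀(s)(s − r_g)^{b/2}` and `f₀, N₀` positive continuous on
`[r_g, r₁]`, `a, b ≥ 0`, the integral `∫_r^{r₁} ds/(√(f(s)) N(s)^{1/n})` diverges (tends to
`+∞`) as `r → r_g⁺` if and only if `a + b/n ≥ 2`. -/
theorem horizon_criterion_n (n : ℕ) (hn : 2 ≤ n) (rg r₁ a b : ℝ) (hr : rg < r₁)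
    (ha : 0 ≤ a) (hb : 0 ≤ b) (f₀ N₀ : ℝ → ℝ)
    (hf₀ : ContinuousOn f₀ (Set.Icc rg r₁)) (hN₀ : ContinuousOn N₀ (Set.Icc rg r₁))
    (hf₀pos : ∀ s ∈ Set.Icc rg r₁, 0 < f₀ s) (hN₀pos : ∀ s ∈ Set.Icc rg r₁, 0 < N₀ s) :
    Tendsto (fun r : ℝ => ∫ s in r..r₁,
        1 / (Real.sqrt (f₀ s * (s - rg) ^ a)
              * (N₀ s * (s - rg) ^ (b / 2)) ^ ((1 : ℝ) / n)))
      (nhdsWithin rg (Set.Ioi rg)) atTop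
    ↔ 2 ≤ a + b / n :=
  horizon_criterion_n_general n rg r₁ a b hr f₀ N₀ hf₀ hN₀ hf₀pos hN₀pos
end

section
/- Let M_A > 0, E > 0 and N² = f = 1 − r_g/r (Schwarzschild). For the dispersion relation F(ζ) = ζ + ζ²/M_A², the radial trajectory speed is H(r,E) = √( f N (4E² + M_A²N²)/(2E²M_A) · (√(4E² + M_A²N²) − M_A N) ). Then H(r) ~ 2√(E/(M_A r_g^{3/2}))·(r − r_g)^{3/4} as r → r_g⁺, and consequently ∫_{r_g}^{r₁} dr/H(r,E) converges, i.e., the coordinate time to reach r_g is finite (no horizon). -/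
open Filter MeasureTheory

/-- Schwarzschild lapse `N(r) = √(1 − r_g/r)` (with `N² = f = 1 − r_g/r`). -/
noncomputable def lapseN (rg r : ℝ) : ℝ := Real.sqrt (1 - rg / r)

/-- Radial trajectory speed for the dispersion `F(ζ) = ζ + ζ²/M_A²`:
`H(r,E) = √( f N (4E² + M_A²N²)/(2E²M_A) · (√(4E² + M_A²N²) − M_A N) )`. -/
noncomputable def Hspeed (rg MA E r : ℝ) : ℝ :=
  Real.sqrt ((1 - rg / r) * lapseN rg r * (4 * E ^ 2 + MA ^ 2 * (1 - rg / r))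
      / (2 * E ^ 2 * MA)
    * (Real.sqrt (4 * E ^ 2 + MA ^ 2 * (1 - rg / r)) - MA * lapseN rg r))

noncomputable def PhiAux (rg MA E r : ℝ) : ℝ :=
  (4 * E ^ 2 + MA ^ 2 * (1 - rg / r)) / (2 * E ^ 2 * MA)
    * (Real.sqrt (4 * E ^ 2 + MA ^ 2 * (1 - rg / r)) - MA * lapseN rg r)
    / r ^ ((3 : ℝ) / 2)

lemma rpow_three_halves {x : ℝ} (hx : 0 < x) : x ^ ((3:ℝ)/2) = x * Real.sqrt x := by
  rw [Real.sqrt_eq_rpow, show (3:ℝ)/2 = 1 + 1/2 by norm_num, Real.rpow_add hx,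
    Real.rpow_one]

lemma sqrtA_sub_pos {MA E N : ℝ} (hMA : 0 < MA) (hE : 0 < E) (hN : 0 ≤ N) (hf : 0 ≤ N ^ 2) :
    0 < Real.sqrt (4 * E ^ 2 + MA ^ 2 * N ^ 2) - MA * N := by
  rw [sub_pos]
  apply Real.lt_sqrt_of_sq_lt
  have : (MA * N) ^ 2 = MA ^ 2 * N ^ 2 := by ring
  nlinarith [sq_nonneg (MA * N)]

lemma ratio_eq (rg MA E r : ℝ) (hrg : 0 < rg) (hMA : 0 < MA) (hE : 0 < E) (hr : rg < r) :
    Hspeed rg MA E r / (r - rg) ^ ((3:ℝ)/4) = Real.sqrt (PhiAux rg MA E r) := by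
  have hr0 : 0 < r := hrg.trans hr
  have hs : 0 < r - rg := sub_pos.mpr hr
  have hf : 0 < 1 - rg / r := by rw [sub_pos]; exact (div_lt_one hr0).mpr hr
  have hN2 : lapseN rg r ^ 2 = 1 - rg / r := Real.sq_sqrt hf.le
  have hsub : 0 < Real.sqrt (4 * E ^ 2 + MA ^ 2 * (1 - rg / r)) - MA * lapseN rg r := by
    have := sqrtA_sub_pos (N := lapseN rg r) hMA hE (Real.sqrt_nonneg _) (by positivity)
    rwa [hN2] at this
  have hPhi : 0 < PhiAux rg MA E r := by
    unfold PhiAux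
    have h1 : 0 < 4 * E ^ 2 + MA ^ 2 * (1 - rg / r) := by positivity
    have h2 : (0:ℝ) < r ^ ((3:ℝ)/2) := Real.rpow_pos_of_pos hr0 _
    positivity
  have hfe : 1 - rg / r = (r - rg) / r := by field_simp
  have hNe : lapseN rg r = Real.sqrt (r - rg) / Real.sqrt r := by
    rw [lapseN, hfe, Real.sqrt_div hs.le]
  have hinner : (1 - rg / r) * lapseN rg r * (4 * E ^ 2 + MA ^ 2 * (1 - rg / r))
      / (2 * E ^ 2 * MA)
      * (Real.sqrt (4 * E ^ 2 + MA ^ 2 * (1 - rg / r)) - MA * lapseN rg r)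
      = PhiAux rg MA E r * (r - rg) ^ ((3:ℝ)/2) := by
    unfold PhiAux
    rw [rpow_three_halves hs, rpow_three_halves hr0]
    rw [hNe, hfe] 
    have hsr : Real.sqrt r ≠ 0 := by positivity
    field_simp
  rw [Hspeed, hinner, Real.sqrt_mul hPhi.le,
    show ((r - rg) ^ ((3:ℝ)/2)) = ((r - rg) ^ ((3:ℝ)/4)) ^ 2 by
      rw [← Real.rpow_natCast ((r - rg) ^ ((3:ℝ)/4)) 2, ← Real.rpow_mul hs.le]; norm_num,
    Real.sqrt_sq (by positivity)]
  have h34 : ((r - rg) ^ ((3:ℝ)/4)) ≠ 0 := by positivity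
  field_simp

lemma contAt_aux {rg : ℝ} {r : ℝ} (hr : r ≠ 0) :
    ContinuousAt (fun x : ℝ => 1 - rg / x) r :=
  continuousAt_const.sub (continuousAt_const.div continuousAt_id hr)

lemma contAt_H {rg MA E : ℝ} {r : ℝ} (hr : r ≠ 0) :
    ContinuousAt (Hspeed rg MA E) r := by
  unfold Hspeed lapseN
  have h1 : ContinuousAt (fun x : ℝ => 1 - rg / x) r := contAt_aux hr
  fun_prop

lemma contAt_Phi {rg MA E : ℝ} {r : ℝ} (hr : 0 < r) (hMA : 0 < MA) (hE : 0 < E) :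
    ContinuousAt (PhiAux rg MA E) r := by
  unfold PhiAux lapseN
  have h1 : ContinuousAt (fun x : ℝ => 1 - rg / x) r := contAt_aux hr.ne'
  have h2 : ContinuousAt (fun x : ℝ => x ^ ((3:ℝ)/2)) r :=
    Real.continuousAt_rpow_const r _ (Or.inl hr.ne')
  have h3 : r ^ ((3:ℝ)/2) ≠ 0 := (Real.rpow_pos_of_pos hr _).ne'
  have h4 : (2 * E ^ 2 * MA : ℝ) ≠ 0 := by positivity
  fun_prop (disch := first | assumption | (exact Or.inl hr.ne') | positivity)

lemma Phi_at_rg {rg MA E : ℝ} (hrg : 0 < rg) (hMA : 0 < MA) (hE : 0 < E) :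
    PhiAux rg MA E rg = 4 * (E / (MA * rg ^ ((3:ℝ)/2))) := by
  have h0 : 1 - rg / rg = 0 := by rw [div_self hrg.ne']; ring
  have hN : lapseN rg rg = 0 := by rw [lapseN, h0, Real.sqrt_zero]
  have hA : Real.sqrt (4 * E ^ 2 + MA ^ 2 * (1 - rg / rg)) = 2 * E := by
    rw [h0, mul_zero, add_zero, show 4 * E ^ 2 = (2 * E) ^ 2 by ring,
      Real.sqrt_sq (by positivity)]
  rw [PhiAux, hA, hN, h0]
  have h1 : (2 * E ^ 2 * MA : ℝ) ≠ 0 := by positivity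
  have h2 : rg ^ ((3:ℝ)/2) ≠ 0 := (Real.rpow_pos_of_pos hrg _).ne'
  field_simp
  ring

lemma tendsto_part1 (rg MA E : ℝ) (hrg : 0 < rg) (hMA : 0 < MA) (hE : 0 < E) :
    Tendsto (fun r : ℝ => Hspeed rg MA E r / (r - rg) ^ ((3 : ℝ) / 4))
      (nhdsWithin rg (Set.Ioi rg))
      (nhds (2 * Real.sqrt (E / (MA * rg ^ ((3 : ℝ) / 2))))) := by
  have hc : Tendsto (fun r => Real.sqrt (PhiAux rg MA E r))
      (nhdsWithin rg (Set.Ioi rg)) (nhds (Real.sqrt (PhiAux rg MA E rg))) :=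
    (Real.continuous_sqrt.continuousAt.comp (contAt_Phi hrg hMA hE)).tendsto.mono_left
      nhdsWithin_le_nhds
  have hval : Real.sqrt (PhiAux rg MA E rg)
      = 2 * Real.sqrt (E / (MA * rg ^ ((3:ℝ)/2))) := by
    rw [Phi_at_rg hrg hMA hE, show (4:ℝ) = 2 ^ 2 by norm_num,
      Real.sqrt_mul (by positivity), Real.sqrt_sq (by norm_num)]
  rw [← hval]
  refine hc.congr' ?_
  filter_upwards [self_mem_nhdsWithin] with r hr
  exact (ratio_eq rg MA E r hrg hMA hE hr).symm

lemma H_pos (rg MA E r : ℝ) (hrg : 0 < rg) (hMA : 0 < MA) (hE : 0 < E) (hr : rg < r) :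
    0 < Hspeed rg MA E r := by
  have hr0 : 0 < r := hrg.trans hr
  have hf : 0 < 1 - rg / r := by rw [sub_pos]; exact (div_lt_one hr0).mpr hr
  have hN : 0 < lapseN rg r := Real.sqrt_pos.mpr hf
  have hN2 : lapseN rg r ^ 2 = 1 - rg / r := Real.sq_sqrt hf.le
  have hsub : 0 < Real.sqrt (4 * E ^ 2 + MA ^ 2 * (1 - rg / r)) - MA * lapseN rg r := by
    have := sqrtA_sub_pos (N := lapseN rg r) hMA hE hN.le (by positivity)
    rwa [hN2] at this
  apply Real.sqrt_pos.mpr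
  have hA : 0 < 4 * E ^ 2 + MA ^ 2 * (1 - rg / r) := by positivity
  positivity

lemma part2 (rg MA E : ℝ) (hrg : 0 < rg) (hMA : 0 < MA) (hE : 0 < E)
    (r₁ : ℝ) (hr₁ : rg < r₁) :
    IntervalIntegrable (fun r : ℝ => 1 / Hspeed rg MA E r) volume rg r₁ := by
  set L := 2 * Real.sqrt (E / (MA * rg ^ ((3:ℝ)/2))) with hLdef
  have hL : 0 < L := by
    have : 0 < E / (MA * rg ^ ((3:ℝ)/2)) :=
      div_pos hE (mul_pos hMA (Real.rpow_pos_of_pos hrg _))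
    have := Real.sqrt_pos.mpr this
    positivity
  have hev : ∀ᶠ r in nhdsWithin rg (Set.Ioi rg),
      L / 2 < Hspeed rg MA E r / (r - rg) ^ ((3:ℝ)/4) :=
    (tendsto_part1 rg MA E hrg hMA hE).eventually (eventually_gt_nhds (by linarith))
  rw [eventually_nhdsWithin_iff] at hev
  obtain ⟨ε, hε, hball⟩ := Metric.eventually_nhds_iff.mp hev
  set r₂ := min (rg + ε / 2) ((rg + r₁) / 2) with hr₂def
  have h₂l : rg < r₂ := lt_min (by linarith) (by linarith)
  have h₂r : r₂ < r₁ := lt_of_le_of_lt (min_le_right _ _) (by linarith)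
  have hkey : ∀ r ∈ Set.Ioc rg r₂, L / 2 * (r - rg) ^ ((3:ℝ)/4) < Hspeed rg MA E r := by
    intro r hr
    have hs : 0 < r - rg := sub_pos.mpr hr.1
    have hdist : dist r rg < ε := by
      rw [Real.dist_eq, abs_of_pos hs]
      have : r ≤ rg + ε / 2 := hr.2.trans (min_le_left _ _)
      linarith
    have := hball hdist hr.1
    rwa [lt_div_iff₀ (Real.rpow_pos_of_pos hs _)] at this
  apply IntervalIntegrable.trans (b := r₂)
  · -- near piece
    have hg : IntervalIntegrable (fun x : ℝ => 2 / L * (x - rg) ^ (-((3:ℝ)/4)))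
        volume rg r₂ := by
      have h := (intervalIntegral.intervalIntegrable_rpow' (r := -((3:ℝ)/4)) (by norm_num)
        (a := 0) (b := r₂ - rg)).comp_sub_right rg
      simp only [zero_add, sub_add_cancel] at h
      exact h.const_mul _
    rw [intervalIntegrable_iff_integrableOn_Ioc_of_le h₂l.le] at hg ⊢
    apply hg.mono'
    · apply ContinuousOn.aestronglyMeasurable _ measurableSet_Ioc
      intro r hr
      have hrp : 0 < Hspeed rg MA E r := H_pos rg MA E r hrg hMA hE hr.1
      exact (continuousAt_const.div (contAt_H (hrg.trans hr.1).ne') hrp.ne').continuousWithinAt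
    · rw [ae_restrict_iff' measurableSet_Ioc]
      refine Filter.Eventually.of_forall fun r hr => ?_
      have hs : 0 < r - rg := sub_pos.mpr hr.1
      have hHr : 0 < Hspeed rg MA E r := H_pos rg MA E r hrg hMA hE hr.1
      have hb := hkey r hr
      have hx : (0:ℝ) < (r - rg) ^ ((3:ℝ)/4) := Real.rpow_pos_of_pos hs _
      rw [Real.norm_eq_abs, abs_of_pos (by positivity)]
      calc 1 / Hspeed rg MA E r ≤ 1 / (L / 2 * (r - rg) ^ ((3:ℝ)/4)) :=
            one_div_le_one_div_of_le (by positivity) hb.le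
        _ = 2 / L * (r - rg) ^ (-((3:ℝ)/4)) := by
            rw [Real.rpow_neg hs.le]
            field_simp
  · -- far piece
    apply ContinuousOn.intervalIntegrable
    intro r hr
    rw [Set.uIcc_of_le h₂r.le] at hr
    have hrgr : rg < r := lt_of_lt_of_le h₂l hr.1
    have hrp : 0 < Hspeed rg MA E r := H_pos rg MA E r hrg hMA hE hrgr
    exact (continuousAt_const.div (contAt_H (hrg.trans hrgr).ne') hrp.ne').continuousWithinAt

/-- For `M_A, E, r_g > 0`: (i) `H(r) ~ 2√(E/(M_A r_g^{3/2})) (r − r_g)^{3/4}` as `r → r_g⁺`,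
i.e. `H(r)/(r − r_g)^{3/4} → 2√(E/(M_A r_g^{3/2}))`; and (ii) for any `r₁ > r_g` the improper
integral `∫_{r_g}^{r₁} dr/H(r,E)` converges: the coordinate time to reach `r_g` is finite
(no horizon). -/
theorem no_horizon_mixed_dispersion (rg MA E : ℝ) (hrg : 0 < rg) (hMA : 0 < MA)
    (hE : 0 < E) :
    Tendsto (fun r : ℝ => Hspeed rg MA E r / (r - rg) ^ ((3 : ℝ) / 4))
      (nhdsWithin rg (Set.Ioi rg))
      (nhds (2 * Real.sqrt (E / (MA * rg ^ ((3 : ℝ) / 2)))))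
    ∧ ∀ r₁ : ℝ, rg < r₁ →
        IntervalIntegrable (fun r : ℝ => 1 / Hspeed rg MA E r) volume rg r₁ := by
  exact ⟨tendsto_part1 rg MA E hrg hMA hE, fun r₁ hr₁ => part2 rg MA E hrg hMA hE r₁ hr₁⟩
end
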